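/- Suppose Ẽ = E = I_K (the identity matrix) and K ≥ 2. Then every entry of ∇_W 𝓛(W₀) is nonzero and sign(∇_W 𝓛(W₀)) = J_{K,K} − 2·I_K (entrywise sign). Consequently, for the one-step sign-gradient-descent iterate W_η = −η·sign(∇_W 𝓛(W₀)) with any η ≥ 0, the correct-class probabilities are identical across all classes: [f_{W_η}(E_k)]_k = e^{2η}/(e^{2η} + K − 1) for every k ∈ [K]; in particular, whenever max_{k} [f_{W_η}(E_k)]_k ≥ 1−ε one also has min_{k} [f_{W_η}(E_k)]_k ≥ 1−ε. -/

import Mathlib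

noncomputable section

open Matrix

attribute [local instance] Matrix.normedAddCommGroup Matrix.normedSpace

/-- Softmax probability that query `k` (key embedding = `k`-th column of `Ee`) is mapped
to object `k'` (`k'`-th column of `Et`):
`[f_W(E_k)]_{k'} = exp(Ẽ_{k'}ᵀ W E_k) / ∑_{k''} exp(Ẽ_{k''}ᵀ W E_k)`. -/
def prob {K : ℕ} (Et Ee W : Matrix (Fin K) (Fin K) ℝ) (k' k : Fin K) : ℝ :=
  Real.exp ((Etᵀ * W * Ee) k' k) / ∑ k'' : Fin K, Real.exp ((Etᵀ * W * Ee) k'' k)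

/-- Class frequencies: `p_k = α/L` for the first `L` classes, `p_k = (1-α)/(K-L)` for the rest. -/
def pclass (K L : ℕ) (α : ℝ) (k : Fin K) : ℝ :=
  if (k : ℕ) < L then α / L else (1 - α) / ((K : ℝ) - L)

/-- Population cross-entropy loss `𝓛(W) = -∑_k p_k log [f_W(E_k)]_k`. -/
def ploss {K : ℕ} (L : ℕ) (α : ℝ) (Et Ee W : Matrix (Fin K) (Fin K) ℝ) : ℝ :=
  -∑ k : Fin K, pclass K L α k * Real.log (prob Et Ee W k k)

/-- `G` is the Fréchet gradient of `f` at `W` with respect to the Frobenius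
inner product: `f` is differentiable at `W` with differential `H ↦ trace(Gᵀ H)`. -/
def IsGradientAt {K : ℕ} (f : Matrix (Fin K) (Fin K) ℝ → ℝ)
    (G W : Matrix (Fin K) (Fin K) ℝ) : Prop :=
  ∃ l : Matrix (Fin K) (Fin K) ℝ →L[ℝ] ℝ, HasFDerivAt f l W ∧ ∀ H, l H = (Gᵀ * H).trace

/-- `(U, d, V)` is a singular value decomposition of `G`: `U`, `V` orthogonal,
`d` nonnegative, and `G = U · diagonal d · Vᵀ`. -/
def IsSVD {K : ℕ} (G U : Matrix (Fin K) (Fin K) ℝ) (d : Fin K → ℝ)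
    (V : Matrix (Fin K) (Fin K) ℝ) : Prop :=
  Uᵀ * U = 1 ∧ U * Uᵀ = 1 ∧ Vᵀ * V = 1 ∧ V * Vᵀ = 1 ∧ (∀ i, 0 ≤ d i) ∧
    G = U * Matrix.diagonal d * Vᵀ

/-- `U · norm(Σ) · Vᵀ`, where `norm(Σ)` replaces every nonzero diagonal entry of
`Σ = diagonal d` by `1`. -/
def muonOf {K : ℕ} (U : Matrix (Fin K) (Fin K) ℝ) (d : Fin K → ℝ)
    (V : Matrix (Fin K) (Fin K) ℝ) : Matrix (Fin K) (Fin K) ℝ :=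
  U * Matrix.diagonal (fun i => if d i = 0 then (0 : ℝ) else 1) * Vᵀ

def entryCLM {K : ℕ} (i j : Fin K) : Matrix (Fin K) (Fin K) ℝ →L[ℝ] ℝ :=
  LinearMap.toContinuousLinearMap
    { toFun := fun W => W i j
      map_add' := fun _ _ => rfl
      map_smul' := fun _ _ => rfl }

@[simp] lemma entryCLM_apply {K : ℕ} (i j : Fin K) (W : Matrix (Fin K) (Fin K) ℝ) :
    entryCLM i j W = W i j := rfl

lemma sum_std {K : ℕ} (p : Fin K → ℝ) (i j : Fin K) :
    ∑ k : Fin K, p k * ((K:ℝ)⁻¹ * (∑ i' : Fin K, Matrix.single i j (1:ℝ) i' k)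
      - Matrix.single i j (1:ℝ) k k)
    = p j * (K:ℝ)⁻¹ - (if i = j then p j else 0) := by
  have h1 : ∀ k : Fin K, (∑ i' : Fin K, Matrix.single i j (1:ℝ) i' k)
      = if j = k then 1 else 0 := by
    intro k
    simp [Matrix.single, ite_and]
  simp only [h1, Matrix.single, Matrix.of_apply]
  rw [Finset.sum_congr rfl (g := fun k => (if j = k then p k * (K:ℝ)⁻¹ else 0)
    - (if j = k ∧ i = j then p k else 0)) ?_, Finset.sum_sub_distrib]
  · by_cases h : i = j <;> simp [h, ite_and]
  · intro k _
    by_cases hk : j = k <;> by_cases hij : i = j <;> simp_all [mul_sub]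

lemma trace_std {K : ℕ} (G : Matrix (Fin K) (Fin K) ℝ) (i j : Fin K) :
    (Gᵀ * Matrix.single i j 1).trace = G i j := by
  simp [Matrix.trace, Matrix.mul_apply, Matrix.single, Matrix.diag, ite_and]

set_option maxHeartbeats 1000000 in
/-- With identity embeddings `Ẽ = E = I_K`: every entry of the gradient at `W₀ = 0` is
nonzero, its entrywise sign is `J_{K,K} - 2·I_K`, after one sign-GD step every class has
correct-class probability `e^{2η}/(e^{2η}+K-1)`, and consequently the max and min
correct-class probabilities coincide. -/
theorem stmt4 {K : ℕ} (hK : 2 ≤ K)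
    (α β : ℝ) (hα : α ∈ Set.Ioo (0:ℝ) 1) (hβ : β ∈ Set.Ioo (0:ℝ) 1)
    (L : ℕ) (hLβ : (L : ℝ) = β * K) (hL1 : 1 ≤ L) (hLK : L ≤ K - 1)
    (G : Matrix (Fin K) (Fin K) ℝ)
    (hG : IsGradientAt (ploss L α (1 : Matrix (Fin K) (Fin K) ℝ)
        (1 : Matrix (Fin K) (Fin K) ℝ)) G 0) :
    (∀ i j : Fin K, G i j ≠ 0) ∧
    (Matrix.of fun i j : Fin K => Real.sign (G i j))
      = (Matrix.of fun _ _ : Fin K => (1 : ℝ)) - 2 • (1 : Matrix (Fin K) (Fin K) ℝ) ∧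
    ∀ (η : ℝ) (hη : 0 ≤ η) (Wη : Matrix (Fin K) (Fin K) ℝ)
      (hW : Wη = -η • Matrix.of fun i j : Fin K => Real.sign (G i j)),
      (∀ k : Fin K, prob 1 1 Wη k k
          = Real.exp (2 * η) / (Real.exp (2 * η) + (K : ℝ) - 1)) ∧
      ∀ ε : ℝ,
        1 - ε ≤ Finset.univ.sup' ⟨⟨0, by omega⟩, Finset.mem_univ _⟩
            (fun k : Fin K => prob 1 1 Wη k k) →
        1 - ε ≤ Finset.univ.inf' ⟨⟨0, by omega⟩, Finset.mem_univ _⟩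
            (fun k : Fin K => prob 1 1 Wη k k) := by
  haveI : Nonempty (Fin K) := ⟨⟨0, by omega⟩⟩
  have hKpos : (0:ℝ) < K := by positivity
  have hLK' : (L:ℝ) < K := by
    have : L < K := by omega
    exact_mod_cast this
  have hp : ∀ k : Fin K, 0 < pclass K L α k := by
    intro k
    unfold pclass
    split
    · apply div_pos hα.1
      have : 0 < L := hL1
      exact_mod_cast this
    · apply div_pos (by linarith [hα.2])
      linarith
  -- rewrite the loss
  have hrw : ploss L α (1 : Matrix (Fin K) (Fin K) ℝ) (1 : Matrix (Fin K) (Fin K) ℝ)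
      = fun W : Matrix (Fin K) (Fin K) ℝ =>
        ∑ k : Fin K, pclass K L α k * (Real.log (∑ i : Fin K, Real.exp (W i k)) - W k k) := by
    funext W
    unfold ploss prob
    simp only [Matrix.transpose_one, Matrix.one_mul, Matrix.mul_one]
    rw [← Finset.sum_neg_distrib]
    refine Finset.sum_congr rfl fun k _ => ?_
    have hS : 0 < ∑ k'' : Fin K, Real.exp (W k'' k) :=
      Finset.sum_pos (fun _ _ => Real.exp_pos _) Finset.univ_nonempty
    rw [Real.log_div (Real.exp_ne_zero _) hS.ne', Real.log_exp]
    ring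
  set l₀ : Matrix (Fin K) (Fin K) ℝ →L[ℝ] ℝ :=
    ∑ k : Fin K, pclass K L α k •
      (((K:ℝ))⁻¹ • (∑ i : Fin K, entryCLM i k) - entryCLM k k) with hl₀
  have hder : HasFDerivAt
      (ploss L α (1 : Matrix (Fin K) (Fin K) ℝ) (1 : Matrix (Fin K) (Fin K) ℝ)) l₀ 0 := by
    rw [hrw]
    apply HasFDerivAt.fun_sum
    intro k _
    have hSder : HasFDerivAt (fun W : Matrix (Fin K) (Fin K) ℝ => ∑ i : Fin K, Real.exp (W i k))
        (∑ i : Fin K, entryCLM i k) 0 :=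
      HasFDerivAt.fun_sum fun i _ => by
        have h := ((entryCLM i k).hasFDerivAt (x := (0 : Matrix (Fin K) (Fin K) ℝ))).exp
        simp at h
        exact h.congr_fderiv (one_smul _ _)
    have hne : (∑ i : Fin K, Real.exp ((0 : Matrix (Fin K) (Fin K) ℝ) i k)) = (K:ℝ) := by simp
    have hlog := hSder.log (by rw [hne]; positivity)
    rw [hne] at hlog
    exact (hlog.sub ((entryCLM k k).hasFDerivAt)).const_mul (pclass K L α k)
  obtain ⟨l, hl, hlG⟩ := hG
  have hleq : l = l₀ := hl.unique hder
  have hGij : ∀ i j : Fin K, G i j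
      = pclass K L α j * (K:ℝ)⁻¹ - (if i = j then pclass K L α j else 0) := by
    intro i j
    have h := hlG (Matrix.single i j 1)
    rw [hleq] at h
    rw [trace_std] at h
    rw [← h, hl₀]
    simp only [ContinuousLinearMap.sum_apply, ContinuousLinearMap.smul_apply,
      ContinuousLinearMap.sub_apply, ContinuousLinearMap.coe_smul', Pi.smul_apply,
      entryCLM_apply, smul_eq_mul]
    exact sum_std (pclass K L α) i j
  have hKinv : (K:ℝ)⁻¹ < 1 := by
    rw [inv_lt_one_iff₀]; right; exact_mod_cast by omega
  have hGdiag : ∀ j : Fin K, G j j < 0 := by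
    intro j
    rw [hGij j j, if_pos rfl]
    nlinarith [hp j, inv_pos.2 hKpos]
  have hGoff : ∀ i j : Fin K, i ≠ j → 0 < G i j := by
    intro i j hij
    rw [hGij i j, if_neg hij, sub_zero]
    exact mul_pos (hp j) (inv_pos.2 hKpos)
  have part1 : ∀ i j : Fin K, G i j ≠ 0 := by
    intro i j
    rcases eq_or_ne i j with h | h
    · subst h; exact (hGdiag i).ne
    · exact (hGoff i j h).ne'
  have part2 : (Matrix.of fun i j : Fin K => Real.sign (G i j))
      = (Matrix.of fun _ _ : Fin K => (1 : ℝ)) - 2 • (1 : Matrix (Fin K) (Fin K) ℝ) := by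
    ext i j
    rw [Matrix.of_apply, Matrix.sub_apply, Matrix.smul_apply, Matrix.of_apply,
      Matrix.one_apply]
    rcases eq_or_ne i j with h | h
    · subst h
      rw [Real.sign_of_neg (hGdiag i), if_pos rfl]
      norm_num
    · rw [Real.sign_of_pos (hGoff i j h), if_neg h]
      norm_num
  refine ⟨part1, part2, ?_⟩
  intro η hη Wη hW
  have hWentry : ∀ i j : Fin K, Wη i j = if i = j then η else -η := by
    intro i j
    rw [hW, part2, Matrix.smul_apply, Matrix.sub_apply, Matrix.smul_apply,
      Matrix.of_apply, Matrix.one_apply]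
    rcases eq_or_ne i j with h | h
    · rw [if_pos h, if_pos h]; norm_num
    · rw [if_neg h, if_neg h]; norm_num
  have hprob : ∀ k : Fin K, prob 1 1 Wη k k
      = Real.exp (2 * η) / (Real.exp (2 * η) + (K : ℝ) - 1) := by
    intro k
    have hden : ∑ k'' : Fin K, Real.exp (Wη k'' k)
        = Real.exp η + ((K:ℝ) - 1) * Real.exp (-η) := by
      rw [← Finset.add_sum_erase _ _ (Finset.mem_univ k)]
      congr 1
      · rw [hWentry k k, if_pos rfl]
      · rw [Finset.sum_congr rfl (g := fun _ => Real.exp (-η))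
          (fun x hx => by rw [hWentry x k, if_neg (Finset.ne_of_mem_erase hx)]),
          Finset.sum_const, Finset.card_erase_of_mem (Finset.mem_univ k),
          Finset.card_univ, Fintype.card_fin, nsmul_eq_mul,
          Nat.cast_sub (by omega), Nat.cast_one]
    unfold prob
    simp only [Matrix.transpose_one, Matrix.one_mul, Matrix.mul_one]
    rw [hden, hWentry k k, if_pos rfl]
    have ha : 0 < Real.exp η := Real.exp_pos η
    have h2 : Real.exp (2 * η) = Real.exp η * Real.exp η := by
      rw [two_mul, Real.exp_add]
    have hneg : Real.exp (-η) = (Real.exp η)⁻¹ := Real.exp_neg η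
    rw [h2, hneg]
    have hd1 : Real.exp η + ((K:ℝ) - 1) * (Real.exp η)⁻¹ ≠ 0 := by
      have : (0:ℝ) < Real.exp η + ((K:ℝ) - 1) * (Real.exp η)⁻¹ := by
        have h1 : (1:ℝ) ≤ (K:ℝ) - 1 := by
          have : (2:ℝ) ≤ K := by exact_mod_cast hK
          linarith
        positivity
      exact this.ne'
    have hd2 : Real.exp η * Real.exp η + (K:ℝ) - 1 ≠ 0 := by
      have h1 : (1:ℝ) ≤ (K:ℝ) - 1 := by
        have : (2:ℝ) ≤ K := by exact_mod_cast hK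
        linarith
      nlinarith
    rw [div_eq_div_iff hd1 hd2]
    field_simp
    ring
  refine ⟨hprob, ?_⟩
  clear hrw hder hl hlG hleq hGij part2 hW
  intro ε hsup
  have hsupeq : Finset.univ.sup' ⟨⟨0, by omega⟩, Finset.mem_univ _⟩
      (fun k : Fin K => prob 1 1 Wη k k)
      = Real.exp (2 * η) / (Real.exp (2 * η) + (K : ℝ) - 1) := by
    exact (Finset.sup'_congr _ rfl (fun k _ => hprob k)).trans (Finset.sup'_const _ _)
  have hinfeq : Finset.univ.inf' ⟨⟨0, by omega⟩, Finset.mem_univ _⟩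
      (fun k : Fin K => prob 1 1 Wη k k)
      = Real.exp (2 * η) / (Real.exp (2 * η) + (K : ℝ) - 1) := by
    exact (Finset.inf'_congr _ rfl (fun k _ => hprob k)).trans (Finset.inf'_const _ _)
  rw [hinfeq]
  rw [hsupeq] at hsup
  exact hsup

end
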